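/- Let σ ≥ 0, set ζ_σ = (σ/B)^{(m−2)/m}, and let v = v_σ be the regular solution. Then exactly one of the following holds: v(ζ) → +∞, v(ζ) → 0, or v(ζ) → −∞ as ζ → +∞. Moreover: (1) if there exists ζ₁ ≥ ζ_σ with v(ζ₁) > 0 and v'(ζ₁) ≥ 0, then v(ζ) ≥ v(ζ₁) > 0 for all ζ ≥ ζ₁ and v(ζ) → +∞ as ζ → +∞; (2) if there exists ζ₁ ≥ ζ_σ with v(ζ₁) < 0 and v'(ζ₁) ≤ 0, then v(ζ) ≤ v(ζ₁) < 0 for all ζ ≥ ζ₁ and v(ζ) → −∞ as ζ → +∞. -/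

import Mathlib

/-!
Write α = 1/(m-2) and W = ζ^α v'. The equation becomes W' = ζ^(α-1) (b(ζ) - σ) v, and b ≥ σ
beyond ζ_σ, so there W is nondecreasing as long as v ≥ 0. Starting from v > 0, v' ≥ 0 this keeps
v' ≥ 0, hence v ≥ v(ζ₁). A bound v ≥ c > 0 makes W grow like c(m-2)ζ^α, so v' is eventually
bounded below by a positive constant: v → +∞, and a positive nonincreasing v must tend to 0.
If neither (1) nor (2) ever applies beyond ζ_σ, a zero of v with v' ≠ 0 would start such a branch,
and a zero with v' = 0 would force v ≡ 0 on (0, ζ₀] by backward uniqueness for the linear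
system (v, v'), contradicting v(0) = 1. So v keeps one sign, is monotone toward 0 and tends to 0.
-/

open Filter Set

/-- A regular solution of the singular ODE
`-ζ·v'' - v'/(m-2) + B·ζ^{m/(m-2)}·v = σ·v` on `(0,∞)`:
continuously differentiable on `[0,∞)`, twice continuously differentiable on
`(0,∞)`, and normalized by `v 0 = 1`. -/
def RegSol (m B σ : ℝ) (v : ℝ → ℝ) : Prop :=
  ContDiffOn ℝ 1 v (Set.Ici 0) ∧
  ContDiffOn ℝ 2 v (Set.Ioi 0) ∧
  (∀ ζ : ℝ, 0 < ζ →
    -ζ * deriv (deriv v) ζ - deriv v ζ / (m - 2)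
      + B * ζ ^ (m / (m - 2)) * v ζ = σ * v ζ) ∧
  v 0 = 1

open Topology

lemma le_mul_rpow_of_rpow_div_le {m B σ ζ : ℝ} (hm : 2 < m) (hB : 0 < B) (hσ : 0 ≤ σ)
    (hζ : (σ / B) ^ ((m - 2) / m) ≤ ζ) : σ ≤ B * ζ ^ (m / (m - 2)) := by
  have hζ0 : 0 ≤ ζ := (Real.rpow_nonneg (by positivity) _).trans hζ
  rw [← inv_div m, Real.rpow_inv_le_iff_of_pos (by positivity) hζ0
    (div_pos (by linarith) (by linarith))] at hζ
  rwa [div_le_iff₀' hB] at hζ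

lemma ContinuousOn.pos_of_pos_on_Ioo {f : ℝ → ℝ} {a : ℝ} (hf : ContinuousOn f (Ici a))
    (ha : 0 < f a) (hstep : ∀ b, a < b → (∀ t ∈ Ioo a b, 0 < f t) → 0 < f b) :
    ∀ x, a ≤ x → 0 < f x := by
  by_contra! hneg
  set S := Ici a ∩ f ⁻¹' Iic 0
  have hS : IsClosed S := hf.preimage_isClosed_of_isClosed isClosed_Ici isClosed_Iic
  have hmem : sInf S ∈ S := hS.csInf_mem hneg ⟨a, fun _ ht => ht.1⟩
  have hlt : a < sInf S := lt_of_le_of_ne hmem.1 fun h => ha.not_ge (h ▸ hmem.2)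
  refine (hstep _ hlt fun t ht => ?_).not_ge hmem.2
  by_contra! hft
  exact (csInf_le ⟨a, fun _ hs => hs.1⟩ (show t ∈ S from ⟨ht.1.le, hft⟩)).not_gt ht.2

lemma tendsto_atTop_of_eventually_le_deriv {f : ℝ → ℝ} {k : ℝ} (hk : 0 < k)
    (hf : ∀ᶠ x in atTop, DifferentiableAt ℝ f x ∧ k ≤ deriv f x) : Tendsto f atTop atTop := by
  obtain ⟨a, ha⟩ := eventually_atTop.1 hf
  have hlin : ∀ x, a ≤ x → f a + k * (x - a) ≤ f x := fun x hx => by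
    have := (convex_Ici a).mul_sub_le_image_sub_of_le_deriv
      (fun y hy => (ha y hy).1.continuousAt.continuousWithinAt)
      (fun y hy => (ha y (interior_subset hy)).1.differentiableWithinAt)
      (fun y hy => (ha y (interior_subset hy)).2) a self_mem_Ici x hx hx
    linarith
  refine tendsto_atTop_mono' _ (eventually_atTop.2 ⟨a, hlin⟩) ?_
  exact tendsto_atTop_add_const_left _ _
    ((tendsto_atTop_add_const_right _ (-a) tendsto_id).const_mul_atTop hk)

lemma eventually_pos_of_deriv_pos {f : ℝ → ℝ} {x₀ : ℝ} (hd : 0 < deriv f x₀)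
    (h0 : f x₀ = 0) : ∀ᶠ x in 𝓝[>] x₀, 0 < f x := by
  filter_upwards [nhdsWithin_le_nhds (eventually_nhdsWithin_sign_eq_of_deriv_pos hd h0),
    self_mem_nhdsWithin] with x hs hx
  rwa [sign_pos (sub_pos.2 hx), sign_eq_one_iff] at hs

lemma IsPreconnected.pos_or_neg_of_ne_zero {X : Type*} [TopologicalSpace X] {s : Set X}
    {f : X → ℝ} (hs : IsPreconnected s) (hf : ContinuousOn f s) (h0 : ∀ x ∈ s, f x ≠ 0) :
    (∀ x ∈ s, 0 < f x) ∨ (∀ x ∈ s, f x < 0) := by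
  by_contra! h
  obtain ⟨⟨x, hx, hfx⟩, ⟨y, hy, hfy⟩⟩ := h
  obtain ⟨z, hz, hfz⟩ := hs.intermediate_value hx hy hf ⟨hfx, hfy⟩
  exact h0 z hz hfz

lemma lipschitzWith_companion {p q t a : ℝ} (ha : 0 < a) (hat : a ≤ t) :
    LipschitzWith (1 + (|p| + |q|) / a).toNNReal
      (fun x : ℝ × ℝ => (x.2, (p * x.1 - q * x.2) / t)) := by
  refine LipschitzWith.of_dist_le' fun x y => ?_
  simp only [Prod.dist_eq, Real.dist_eq]
  set D := max |x.1 - y.1| |x.2 - y.2|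
  have h1 : |x.1 - y.1| ≤ D := le_max_left _ _
  have h2 : |x.2 - y.2| ≤ D := le_max_right _ _
  have hD : 0 ≤ D := (abs_nonneg _).trans h1
  have hpq : 0 ≤ (|p| + |q|) / a := by positivity
  refine max_le (by nlinarith) ?_
  rw [← sub_div, abs_div, abs_of_pos (ha.trans_le hat), div_le_iff₀ (ha.trans_le hat)]
  calc |p * x.1 - q * x.2 - (p * y.1 - q * y.2)| = |p * (x.1 - y.1) - q * (x.2 - y.2)| := by
        ring_nf
    _ ≤ |p| * D + |q| * D := by
        refine (abs_sub _ _).trans (add_le_add ?_ ?_)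
        · rw [abs_mul]; exact mul_le_mul_of_nonneg_left h1 (abs_nonneg p)
        · rw [abs_mul]; exact mul_le_mul_of_nonneg_left h2 (abs_nonneg q)
    _ = (|p| + |q|) / a * D * a := by field_simp
    _ ≤ (1 + (|p| + |q|) / a) * D * t := by gcongr; linarith

def IsSolution (m B σ : ℝ) (v : ℝ → ℝ) : Prop :=
  ContDiffOn ℝ 1 v (Ici 0) ∧ ContDiffOn ℝ 2 v (Ioi 0) ∧
  ∀ ζ : ℝ, 0 < ζ →
    -ζ * deriv (deriv v) ζ - deriv v ζ / (m - 2) + B * ζ ^ (m / (m - 2)) * v ζ = σ * v ζ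

lemma RegSol.isSolution {m B σ : ℝ} {v : ℝ → ℝ} (h : RegSol m B σ v) : IsSolution m B σ v :=
  ⟨h.1, h.2.1, h.2.2.1⟩

noncomputable def flux (m : ℝ) (v : ℝ → ℝ) (ζ : ℝ) : ℝ := ζ ^ (m - 2)⁻¹ * deriv v ζ

namespace IsSolution

variable {m B σ : ℝ} {v : ℝ → ℝ}

lemma continuousOn (h : IsSolution m B σ v) : ContinuousOn v (Ici 0) := h.1.continuousOn

lemma hasDerivAt (h : IsSolution m B σ v) {ζ : ℝ} (hζ : 0 < ζ) :
    HasDerivAt v (deriv v ζ) ζ :=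
  ((h.2.1.contDiffAt (Ioi_mem_nhds hζ)).differentiableAt (by norm_num)).hasDerivAt

lemma contDiffOn_deriv (h : IsSolution m B σ v) : ContDiffOn ℝ 1 (deriv v) (Ioi 0) :=
  h.2.1.deriv_of_isOpen isOpen_Ioi (by norm_num)

lemma hasDerivAt_deriv (h : IsSolution m B σ v) {ζ : ℝ} (hζ : 0 < ζ) :
    HasDerivAt (deriv v) (deriv (deriv v) ζ) ζ :=
  ((h.contDiffOn_deriv.contDiffAt (Ioi_mem_nhds hζ)).differentiableAt (by norm_num)).hasDerivAt

lemma neg (h : IsSolution m B σ v) : IsSolution m B σ (-v) := by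
  refine ⟨h.1.neg, h.2.1.neg, fun ζ hζ => ?_⟩
  simp only [deriv.neg', Pi.neg_apply, deriv.fun_neg]
  linear_combination -h.2.2 ζ hζ

lemma monotoneOn (h : IsSolution m B σ v) {D : Set ℝ} (hD : Convex ℝ D) (hD0 : D ⊆ Ici 0)
    (hd : ∀ ζ ∈ interior D, 0 ≤ deriv v ζ) : MonotoneOn v D := by
  have hpos : ∀ ζ ∈ interior D, 0 < ζ := fun ζ hζ => by
    simpa using interior_mono hD0 hζ
  exact monotoneOn_of_deriv_nonneg hD (h.continuousOn.mono hD0)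
    (fun ζ hζ => (h.hasDerivAt (hpos ζ hζ)).differentiableAt.differentiableWithinAt) hd

lemma antitoneOn (h : IsSolution m B σ v) {D : Set ℝ} (hD : Convex ℝ D) (hD0 : D ⊆ Ici 0)
    (hd : ∀ ζ ∈ interior D, deriv v ζ ≤ 0) : AntitoneOn v D := by
  simpa using (h.neg.monotoneOn hD hD0 fun ζ hζ => by simpa [deriv.neg] using hd ζ hζ).neg

lemma hasDerivAt_flux (h : IsSolution m B σ v) {ζ : ℝ} (hζ : 0 < ζ) :
    HasDerivAt (flux m v) (ζ ^ ((m - 2)⁻¹ - 1) * ((B * ζ ^ (m / (m - 2)) - σ) * v ζ)) ζ := by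
  refine ((Real.hasDerivAt_rpow_const (Or.inl hζ.ne')).mul (h.hasDerivAt_deriv hζ)).congr_deriv ?_
  have hζα : ζ ^ (m - 2)⁻¹ = ζ ^ ((m - 2)⁻¹ - 1) * ζ := by
    rw [← Real.rpow_add_one hζ.ne', sub_add_cancel]
  have hode := h.2.2 ζ hζ
  rw [hζα]
  linear_combination -ζ ^ ((m - 2)⁻¹ - 1) * hode

lemma continuousOn_flux (h : IsSolution m B σ v) (hm : 2 < m) :
    ContinuousOn (flux m v) (Ici 0) := by
  -- `deriv v 0` is arbitrary, but `0 ^ α = 0` hides it and the one-sided derivative is continuous.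
  have hα : (m - 2)⁻¹ ≠ 0 := inv_ne_zero (by linarith)
  refine ContinuousOn.congr (f := fun ζ => ζ ^ (m - 2)⁻¹ * derivWithin v (Ici 0) ζ)
    ((Real.continuous_rpow_const (by positivity)).continuousOn.mul
      (h.1.continuousOn_derivWithin (uniqueDiffOn_Ici 0) le_rfl)) fun ζ hζ => ?_
  rcases (mem_Ici.1 hζ).eq_or_lt with rfl | hζ
  · simp [flux, Real.zero_rpow hα]
  · simp [flux, derivWithin_of_mem_nhds (Ici_mem_nhds hζ)]

lemma monotoneOn_flux (h : IsSolution m B σ v) (hm : 2 < m) {D : Set ℝ} (hD : Convex ℝ D)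
    (hD0 : D ⊆ Ici 0) (hv : ∀ ζ ∈ interior D, 0 ≤ (B * ζ ^ (m / (m - 2)) - σ) * v ζ) :
    MonotoneOn (flux m v) D := by
  have hpos : ∀ ζ ∈ interior D, 0 < ζ := fun ζ hζ => by
    simpa using interior_mono hD0 hζ
  refine monotoneOn_of_deriv_nonneg hD ((h.continuousOn_flux hm).mono hD0)
    (fun ζ hζ => (h.hasDerivAt_flux (hpos ζ hζ)).differentiableAt.differentiableWithinAt)
    fun ζ hζ => ?_
  rw [(h.hasDerivAt_flux (hpos ζ hζ)).deriv]
  exact mul_nonneg (Real.rpow_nonneg (hpos ζ hζ).le _) (hv ζ hζ)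

lemma le_of_flux_nonneg (h : IsSolution m B σ v) (hm : 2 < m) (hB : 0 < B) (hσ : 0 ≤ σ)
    {ζ₁ : ℝ} (hζ₁ : (σ / B) ^ ((m - 2) / m) ≤ ζ₁) (hv : 0 < v ζ₁) (hW : 0 ≤ flux m v ζ₁) :
    ∀ ζ, ζ₁ ≤ ζ → v ζ₁ ≤ v ζ := by
  have h0 : 0 ≤ ζ₁ := (Real.rpow_nonneg (by positivity) _).trans hζ₁
  have hmono : ∀ b, (∀ t ∈ Ioo ζ₁ b, 0 < v t) → MonotoneOn v (Icc ζ₁ b) := by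
    intro b hb
    have hsub : Icc ζ₁ b ⊆ Ici 0 := fun t ht => h0.trans ht.1
    have hWmono := h.monotoneOn_flux hm (convex_Icc _ _) hsub fun t ht => by
      rw [interior_Icc] at ht
      exact mul_nonneg (sub_nonneg.2 (le_mul_rpow_of_rpow_div_le hm hB hσ (hζ₁.trans ht.1.le)))
        (hb t ht).le
    refine h.monotoneOn (convex_Icc _ _) hsub fun t ht => ?_
    rw [interior_Icc] at ht
    have hWt : 0 ≤ flux m v t :=
      hW.trans (hWmono (left_mem_Icc.2 (ht.1.trans ht.2).le) ⟨ht.1.le, ht.2.le⟩ ht.1.le)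
    exact nonneg_of_mul_nonneg_right hWt (Real.rpow_pos_of_pos (h0.trans_lt ht.1) _)
  have hpos := (h.continuousOn.mono (Ici_subset_Ici.2 h0)).pos_of_pos_on_Ioo hv
    fun b hb hpos => hv.trans_le (hmono b hpos (left_mem_Icc.2 hb.le) (right_mem_Icc.2 hb.le) hb.le)
  exact fun ζ hζ => hmono ζ (fun t ht => hpos t ht.1.le) (left_mem_Icc.2 hζ) (right_mem_Icc.2 hζ) hζ

lemma eventually_le_deriv (h : IsSolution m B σ v) (hm : 2 < m) (hB : 0 < B) {c : ℝ}
    (hc : 0 < c) (hv : ∀ᶠ ζ in atTop, c ≤ v ζ) : ∃ k > 0, ∀ᶠ ζ in atTop, k ≤ deriv v ζ := by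
  set α := (m - 2)⁻¹
  have hα : 0 < α := inv_pos.2 (by linarith)
  have hb : Tendsto (fun ζ => B * ζ ^ (m / (m - 2))) atTop atTop :=
    (tendsto_rpow_atTop (div_pos (by linarith) (by linarith))).const_mul_atTop hB
  obtain ⟨ζ₃, hζ₃⟩ := eventually_atTop.1 ((eventually_gt_atTop 0).and
    (hv.and (hb.eventually_ge_atTop (σ + 1))))
  have hα' : (m - 2) * α = 1 := mul_inv_cancel₀ (by linarith)
  have hg : MonotoneOn (fun ζ => flux m v ζ - c * (m - 2) * ζ ^ α) (Ici ζ₃) := by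
    have hd : ∀ ζ, ζ₃ ≤ ζ → HasDerivAt (fun ζ => flux m v ζ - c * (m - 2) * ζ ^ α)
        (ζ ^ (α - 1) * ((B * ζ ^ (m / (m - 2)) - σ) * v ζ - c)) ζ := fun ζ hζ => by
      refine ((h.hasDerivAt_flux (hζ₃ ζ hζ).1).sub ((Real.hasDerivAt_rpow_const
        (Or.inl (hζ₃ ζ hζ).1.ne')).const_mul (c * (m - 2)))).congr_deriv ?_
      linear_combination (-(c * ζ ^ (α - 1))) * hα'
    refine monotoneOn_of_deriv_nonneg (convex_Ici _)
      (fun ζ hζ => (hd ζ hζ).continuousAt.continuousWithinAt)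
      (fun ζ hζ => (hd ζ (interior_subset hζ)).differentiableAt.differentiableWithinAt)
      fun ζ hζ => ?_
    obtain ⟨hζ0, hcv, hbσ⟩ := hζ₃ ζ (interior_subset hζ)
    rw [(hd ζ (interior_subset hζ)).deriv]
    refine mul_nonneg (Real.rpow_nonneg hζ0.le _) ?_
    nlinarith
  set C := c * (m - 2) * ζ₃ ^ α - flux m v ζ₃
  have hlow : ∀ ζ, ζ₃ ≤ ζ → c * (m - 2) - C * ζ ^ (-α) ≤ deriv v ζ := fun ζ hζ => by
    have hζ0 := (hζ₃ ζ hζ).1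
    have hgζ := hg self_mem_Ici hζ hζ
    have hinv : ζ ^ α * ζ ^ (-α) = 1 := by
      rw [Real.rpow_neg hζ0.le, mul_inv_cancel₀ (Real.rpow_pos_of_pos hζ0 _).ne']
    have hflux : deriv v ζ = flux m v ζ * ζ ^ (-α) := by
      rw [flux, mul_comm (ζ ^ α), mul_assoc, hinv, mul_one]
    simp only at hgζ
    calc c * (m - 2) - C * ζ ^ (-α) = (c * (m - 2) * ζ ^ α - C) * ζ ^ (-α) := by
          linear_combination (-(c * (m - 2))) * hinv
      _ ≤ deriv v ζ := by
          rw [hflux]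
          exact mul_le_mul_of_nonneg_right (by linarith) (Real.rpow_nonneg hζ0.le _)
  have hlim : Tendsto (fun ζ => c * (m - 2) - C * ζ ^ (-α)) atTop (𝓝 (c * (m - 2))) := by
    simpa using ((tendsto_rpow_neg_atTop hα).const_mul C).const_sub (c * (m - 2))
  refine ⟨c * (m - 2) / 2, by nlinarith, ?_⟩
  filter_upwards [hlim.eventually (lt_mem_nhds (by nlinarith : c * (m - 2) / 2 < c * (m - 2))),
    eventually_ge_atTop ζ₃] with ζ h1 h2
  exact h1.le.trans (hlow ζ h2)

lemma eq_zero_of_eq_zero_of_deriv_eq_zero (h : IsSolution m B σ v) (hm : 2 < m) {a ζ₀ : ℝ}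
    (ha : 0 < a) (haζ₀ : a ≤ ζ₀) (hv : v ζ₀ = 0) (hd : deriv v ζ₀ = 0) : v a = 0 := by
  set r := m / (m - 2)
  set F : ℝ → ℝ × ℝ → ℝ × ℝ :=
    fun t x => (x.2, ((B * t ^ r - σ) * x.1 - (m - 2)⁻¹ * x.2) / t)
  -- `(v, v')` solves `x' = F t x`; its Lipschitz constant is uniform only away from `t = 0`.
  have hF : ∀ t ∈ Ioc a ζ₀, LipschitzOnWith
      (1 + (|B| * ζ₀ ^ r + |σ| + |(m - 2)⁻¹|) / a).toNNReal (F t) univ := fun t ht => by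
    refine ((lipschitzWith_companion ha ht.1.le).weaken ?_).lipschitzOnWith
    have hBt : |B * t ^ r| ≤ |B| * ζ₀ ^ r := by
      rw [abs_mul, abs_of_nonneg (Real.rpow_nonneg (ha.trans ht.1).le _)]
      exact mul_le_mul_of_nonneg_left (Real.rpow_le_rpow (ha.trans ht.1).le ht.2
        (div_nonneg (by linarith) (by linarith))) (abs_nonneg B)
    have hb : |B * t ^ r - σ| ≤ |B| * ζ₀ ^ r + |σ| := (abs_sub _ _).trans (by linarith)
    gcongr
  have hsol : ∀ t ∈ Ioc a ζ₀,
      HasDerivWithinAt (fun t => (v t, deriv v t)) (F t (v t, deriv v t)) (Iic t) t := by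
    intro t ht
    have ht0 : 0 < t := ha.trans ht.1
    refine ((h.hasDerivAt ht0).prodMk (h.hasDerivAt_deriv ht0)).hasDerivWithinAt.congr_deriv ?_
    simp only [F, Prod.mk.injEq, true_and]
    field_simp
    linear_combination -h.2.2 t ht0
  have hsub : Icc a ζ₀ ⊆ Ioi 0 := fun t ht => ha.trans_le ht.1
  have heq := ODE_solution_unique_of_mem_Icc_left hF
    ((h.continuousOn.mono (hsub.trans Ioi_subset_Ici_self)).prodMk
      (h.contDiffOn_deriv.continuousOn.mono hsub))
    hsol (fun _ _ => trivial) (g := fun _ => 0) continuousOn_const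
    (fun t _ => (hasDerivWithinAt_const t (Iic t) (0 : ℝ × ℝ)).congr_deriv (by simp [F]; rfl))
    (fun _ _ => trivial) (by simp [hv, hd])
  exact congrArg Prod.fst (heq (left_mem_Icc.2 haζ₀))

lemma eventually_pos_and_deriv_pos (h : IsSolution m B σ v) {ζ : ℝ} (hζ : 0 < ζ)
    (hv : v ζ = 0) (hd : 0 < deriv v ζ) : ∀ᶠ t in 𝓝[>] ζ, 0 < v t ∧ 0 < deriv v t := by
  have hcont := h.contDiffOn_deriv.continuousOn.continuousAt (Ioi_mem_nhds hζ)
  exact (eventually_pos_of_deriv_pos hd hv).and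
    (nhdsWithin_le_nhds (hcont.eventually (lt_mem_nhds hd)))

lemma tendsto_atTop_of_deriv_nonneg (h : IsSolution m B σ v) (hm : 2 < m) (hB : 0 < B)
    (hσ : 0 ≤ σ) {ζ₁ : ℝ} (hζ₁ : (σ / B) ^ ((m - 2) / m) ≤ ζ₁) (hv : 0 < v ζ₁)
    (hd : 0 ≤ deriv v ζ₁) : (∀ ζ, ζ₁ ≤ ζ → v ζ₁ ≤ v ζ) ∧ Tendsto v atTop atTop := by
  have h0 : 0 ≤ ζ₁ := (Real.rpow_nonneg (by positivity) _).trans hζ₁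
  have hle := h.le_of_flux_nonneg hm hB hσ hζ₁ hv (mul_nonneg (Real.rpow_nonneg h0 _) hd)
  obtain ⟨k, hk, hkd⟩ := h.eventually_le_deriv hm hB hv (eventually_atTop.2 ⟨ζ₁, hle⟩)
  refine ⟨hle, tendsto_atTop_of_eventually_le_deriv hk ?_⟩
  filter_upwards [hkd, eventually_gt_atTop 0] with ζ hkζ hζ
  exact ⟨(h.hasDerivAt hζ).differentiableAt, hkζ⟩

lemma tendsto_atBot_of_deriv_nonpos (h : IsSolution m B σ v) (hm : 2 < m) (hB : 0 < B)
    (hσ : 0 ≤ σ) {ζ₁ : ℝ} (hζ₁ : (σ / B) ^ ((m - 2) / m) ≤ ζ₁) (hv : v ζ₁ < 0)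
    (hd : deriv v ζ₁ ≤ 0) : (∀ ζ, ζ₁ ≤ ζ → v ζ ≤ v ζ₁) ∧ Tendsto v atTop atBot := by
  obtain ⟨hle, hlim⟩ := h.neg.tendsto_atTop_of_deriv_nonneg hm hB hσ hζ₁ (by simpa using hv)
    (by simpa [deriv.neg] using hd)
  exact ⟨fun ζ hζ => by simpa using hle ζ hζ, tendsto_neg_atTop_iff.1 hlim⟩

lemma tendsto_zero_of_pos_of_deriv_nonpos (h : IsSolution m B σ v) (hm : 2 < m) (hB : 0 < B)
    {a : ℝ} (ha : 0 ≤ a) (hpos : ∀ ζ, a ≤ ζ → 0 < v ζ) (hd : ∀ ζ, a ≤ ζ → deriv v ζ ≤ 0) :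
    Tendsto v atTop (𝓝 0) := by
  have hanti : AntitoneOn v (Ici a) :=
    h.antitoneOn (convex_Ici a) (Ici_subset_Ici.2 ha) fun ζ hζ => hd ζ (interior_subset hζ)
  refine tendsto_order.2 ⟨fun ε hε => eventually_atTop.2 ⟨a, fun ζ hζ => hε.trans (hpos ζ hζ)⟩,
    fun ε hε => ?_⟩
  by_contra hfreq
  rw [not_eventually] at hfreq
  have hlb : ∀ ζ, a ≤ ζ → ε ≤ v ζ := fun ζ hζ => by
    obtain ⟨x, hvx, hx⟩ := (hfreq.and_eventually (eventually_ge_atTop ζ)).exists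
    exact (not_lt.1 hvx).trans (hanti hζ (hζ.trans hx) hx)
  obtain ⟨k, hk, hkd⟩ := h.eventually_le_deriv hm hB hε (eventually_atTop.2 ⟨a, hlb⟩)
  obtain ⟨ζ, hkζ, hζ⟩ := (hkd.and (eventually_ge_atTop a)).exists
  exact (hk.trans_le hkζ).not_ge (hd ζ hζ)

end IsSolution

namespace RegSol

variable {m B σ : ℝ} {v : ℝ → ℝ}

lemma deriv_ne_zero_of_eq_zero (hv : RegSol m B σ v) (hm : 2 < m) {ζ₀ : ℝ} (hζ₀ : 0 < ζ₀)
    (h0 : v ζ₀ = 0) : deriv v ζ₀ ≠ 0 := by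
  intro hd
  have hone : Tendsto v (𝓝[>] 0) (𝓝 1) := hv.2.2.2 ▸
    ((hv.isSolution.continuousOn 0 self_mem_Ici).tendsto.mono_left
      (nhdsWithin_mono _ Ioi_subset_Ici_self))
  have hzero : Tendsto v (𝓝[>] 0) (𝓝 0) := tendsto_const_nhds.congr' <| by
    filter_upwards [Ioc_mem_nhdsGT hζ₀] with a ha
    exact (hv.isSolution.eq_zero_of_eq_zero_of_deriv_eq_zero hm ha.1 ha.2 h0 hd).symm
  exact one_ne_zero (tendsto_nhds_unique hone hzero)

lemma ne_zero_of_sign_deriv (hv : RegSol m B σ v) (hm : 2 < m) {a : ℝ} (ha : 0 < a)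
    (hup : ∀ ζ, a ≤ ζ → 0 < v ζ → deriv v ζ < 0)
    (hdown : ∀ ζ, a ≤ ζ → v ζ < 0 → 0 < deriv v ζ) : ∀ ζ, a ≤ ζ → v ζ ≠ 0 := by
  intro ζ hζ h0
  have hζ0 := ha.trans_le hζ
  rcases lt_trichotomy (deriv v ζ) 0 with hd | hd | hd
  · obtain ⟨t, ⟨hvt, hdt⟩, hζt⟩ := ((hv.isSolution.neg.eventually_pos_and_deriv_pos hζ0
      (by simp [h0]) (by simpa [deriv.neg] using hd)).and self_mem_nhdsWithin).exists
    simp only [Pi.neg_apply, neg_pos, deriv.neg] at hvt hdt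
    exact (hdown t (hζ.trans (le_of_lt hζt)) hvt).not_gt hdt
  · exact hv.deriv_ne_zero_of_eq_zero hm hζ0 h0 hd
  · obtain ⟨t, ⟨hvt, hdt⟩, hζt⟩ := ((hv.isSolution.eventually_pos_and_deriv_pos hζ0 h0 hd).and
      self_mem_nhdsWithin).exists
    exact (hup t (hζ.trans (le_of_lt hζt)) hvt).not_gt hdt

lemma tendsto_trichotomy (hv : RegSol m B σ v) (hm : 2 < m) (hB : 0 < B) (hσ : 0 ≤ σ) :
    Tendsto v atTop atTop ∨ Tendsto v atTop (𝓝 0) ∨ Tendsto v atTop atBot := by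
  have h := hv.isSolution
  set a := max ((σ / B) ^ ((m - 2) / m)) 1
  have ha : (σ / B) ^ ((m - 2) / m) ≤ a := le_max_left _ _
  have ha0 : 0 < a := zero_lt_one.trans_le (le_max_right _ _)
  by_cases hup : ∃ ζ, a ≤ ζ ∧ 0 < v ζ ∧ 0 ≤ deriv v ζ
  · obtain ⟨ζ, hζ, hvζ, hdζ⟩ := hup
    exact Or.inl (h.tendsto_atTop_of_deriv_nonneg hm hB hσ (ha.trans hζ) hvζ hdζ).2
  by_cases hdown : ∃ ζ, a ≤ ζ ∧ v ζ < 0 ∧ deriv v ζ ≤ 0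
  · obtain ⟨ζ, hζ, hvζ, hdζ⟩ := hdown
    exact Or.inr (Or.inr (h.tendsto_atBot_of_deriv_nonpos hm hB hσ (ha.trans hζ) hvζ hdζ).2)
  push Not at hup hdown
  have hne := hv.ne_zero_of_sign_deriv hm ha0 hup hdown
  rcases isPreconnected_Ici.pos_or_neg_of_ne_zero (h.continuousOn.mono (Ici_subset_Ici.2 ha0.le))
    hne with hpos | hneg
  · exact Or.inr (Or.inl (h.tendsto_zero_of_pos_of_deriv_nonpos hm hB ha0.le hpos
      fun ζ hζ => (hup ζ hζ (hpos ζ hζ)).le))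
  · have := h.neg.tendsto_zero_of_pos_of_deriv_nonpos hm hB ha0.le (fun ζ hζ => by
      simpa using hneg ζ hζ) fun ζ hζ => by simpa [deriv.neg] using (hdown ζ hζ (hneg ζ hζ)).le
    exact Or.inr (Or.inl (by simpa using this.neg))

end RegSol

theorem stmt8 (m B σ : ℝ) (hm : 3 < m) (hB : 0 < B) (hσ : 0 ≤ σ)
    (v : ℝ → ℝ) (hv : RegSol m B σ v) :
    (Filter.Tendsto v Filter.atTop Filter.atTop ∨
      Filter.Tendsto v Filter.atTop (nhds 0) ∨
      Filter.Tendsto v Filter.atTop Filter.atBot) ∧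
    (∀ ζ₁ : ℝ, (σ / B) ^ ((m - 2) / m) ≤ ζ₁ → 0 < v ζ₁ → 0 ≤ deriv v ζ₁ →
      (∀ ζ : ℝ, ζ₁ ≤ ζ → v ζ₁ ≤ v ζ) ∧
      Filter.Tendsto v Filter.atTop Filter.atTop) ∧
    (∀ ζ₁ : ℝ, (σ / B) ^ ((m - 2) / m) ≤ ζ₁ → v ζ₁ < 0 → deriv v ζ₁ ≤ 0 →
      (∀ ζ : ℝ, ζ₁ ≤ ζ → v ζ ≤ v ζ₁) ∧
      Filter.Tendsto v Filter.atTop Filter.atBot) := by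
  have hm' : 2 < m := by linarith
  have h := hv.isSolution
  exact ⟨hv.tendsto_trichotomy hm' hB hσ,
    fun _ hζ₁ hv₁ hd₁ => h.tendsto_atTop_of_deriv_nonneg hm' hB hσ hζ₁ hv₁ hd₁,
    fun _ hζ₁ hv₁ hd₁ => h.tendsto_atBot_of_deriv_nonpos hm' hB hσ hζ₁ hv₁ hd₁⟩
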